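/- Let J₊⁻¹(z) = z − √(z−1)·√(z+1) with principal branch square roots. For every x ∈ (−1,1): lim_{ε→0⁺} J₊⁻¹(x+iε) = x − i·√(1−x)·√(1+x) and lim_{ε→0⁺} J₊⁻¹(x−iε) = x + i·√(1−x)·√(1+x); moreover, for every integer k ≥ 0, (x − i√(1−x²))^k + (x + i√(1−x²))^k = 2·T_k(x), where T_k is the k-th Chebyshev polynomial of the first kind. Consequently the sum of the two one-sided boundary values of J₊⁻¹(·)^k at x equals 2·T_k(x). -/

import Mathlib

open Complex Filter Topology

/-- The inverse Joukowski transform `J₊⁻¹(z) = z − √(z−1)·√(z+1)`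
(principal branch square roots). -/
noncomputable def JoukowskiInv (z : ℂ) : ℂ :=
  z - (z - 1) ^ ((1 : ℂ) / 2) * (z + 1) ^ ((1 : ℂ) / 2)

/-! Approaching a point `t < 0` of the branch cut, `log z` tends to `log |t| + πi` from above and
to `log |t| - πi` from below, so `z ^ (1/2)` tends to `±i√|t|`; the factor `(z + 1) ^ (1/2)` is
continuous at `x + 1 > 0`. For the Chebyshev identity, `a = x - is` and `b = x + is` with
`x² + s² = 1` satisfy `a + b = 2x` and `ab = 1`, so `aⁿ + bⁿ` obeys the recurrence
`T_{n+2} = 2x T_{n+1} - T_n`. -/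

open scoped Real

namespace Polynomial.Chebyshev

theorem two_mul_T_eval_eq_pow_add_pow {R : Type*} [CommRing R] {x a b : R}
    (hadd : a + b = 2 * x) (hmul : a * b = 1) (n : ℕ) :
    2 * (T R n).eval x = a ^ n + b ^ n := by
  induction n using Nat.twoStepInduction with
  | zero => norm_num
  | one => simp [hadd]
  | more n ih₀ ih₁ =>
    calc 2 * (T R ↑(n + 2)).eval x
        = 2 * x * (2 * (T R ↑(n + 1)).eval x) - 2 * (T R n).eval x := by
          rw [Nat.cast_add, Nat.cast_two, T_add_two, Nat.cast_succ]
          simp only [eval_sub, eval_mul, eval_X, eval_ofNat]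
          ring
      _ = (a + b) * (a ^ (n + 1) + b ^ (n + 1)) - a * b * (a ^ n + b ^ n) := by
          rw [ih₀, ih₁, hadd, hmul]; ring
      _ = a ^ (n + 2) + b ^ (n + 2) := by ring

end Polynomial.Chebyshev

theorem sub_I_mul_pow_add_add_I_mul_pow {x s : ℂ} (h : x ^ 2 + s ^ 2 = 1) (k : ℕ) :
    (x - I * s) ^ k + (x + I * s) ^ k = 2 * (Polynomial.Chebyshev.T ℂ k).eval x :=
  (Polynomial.Chebyshev.two_mul_T_eval_eq_pow_add_pow (by ring)
    (by linear_combination h - s ^ 2 * I_sq) k).symm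

theorem continuousWithinAt_cpow_const_of_re_neg_of_im_zero {z : ℂ} (hre : z.re < 0)
    (him : z.im = 0) (w : ℂ) : ContinuousWithinAt (· ^ w) {z : ℂ | 0 ≤ z.im} z := by
  have hz : z ≠ 0 := fun h => by simp [h] at hre
  have hexp : ContinuousWithinAt (fun z => exp (log z * w)) {z : ℂ | 0 ≤ z.im} z :=
    continuous_exp.continuousAt.comp_continuousWithinAt
      ((continuousWithinAt_log_of_re_neg_of_im_zero hre him).mul continuousWithinAt_const)
  refine hexp.congr_of_eventuallyEq ?_ (cpow_def_of_ne_zero hz w)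
  filter_upwards [nhdsWithin_le_nhds (isOpen_ne.mem_nhds hz)] with y hy
    using cpow_def_of_ne_zero hy w

theorem tendsto_cpow_const_nhdsWithin_im_neg_of_neg {a : ℝ} (ha : a < 0) (w : ℂ) :
    Tendsto (· ^ w) (𝓝[{z : ℂ | z.im < 0}] (a : ℂ)) (𝓝 ((-a : ℂ) ^ w * exp (-(π * I * w)))) := by
  have hz : (a : ℂ) ≠ 0 := ofReal_ne_zero.2 ha.ne
  have hlog := tendsto_log_nhdsWithin_im_neg_of_re_neg_of_im_zero (z := a) (by simpa) (by simp)
  have hexp := (continuous_exp.tendsto _).comp (hlog.mul_const w)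
  have hval : exp ((Real.log ‖(a : ℂ)‖ - π * I) * w) = (-a : ℂ) ^ w * exp (-(π * I * w)) := by
    rw [cpow_def_of_ne_zero (neg_ne_zero.2 hz), ← exp_add, norm_real, Real.norm_eq_abs,
      abs_of_neg ha, ← ofReal_neg, ofReal_log (by linarith)]
    ring_nf
  rw [hval] at hexp
  refine hexp.congr' ?_
  filter_upwards [nhdsWithin_le_nhds (isOpen_ne.mem_nhds hz)] with y hy
    using (cpow_def_of_ne_zero hy w).symm

theorem ofReal_cpow_half {a : ℝ} (ha : 0 ≤ a) : (a : ℂ) ^ (1 / 2 : ℂ) = √a := by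
  rw [Real.sqrt_eq_rpow, ofReal_cpow ha]
  norm_num

theorem tendsto_cpow_half_nhdsWithin_im_nonneg_of_neg {a : ℝ} (ha : a < 0) :
    Tendsto (· ^ (1 / 2 : ℂ)) (𝓝[{z : ℂ | 0 ≤ z.im}] (a : ℂ)) (𝓝 (I * √(-a))) := by
  have h := (continuousWithinAt_cpow_const_of_re_neg_of_im_zero (z := a) (by simpa) (by simp)
    (1 / 2)).tendsto
  rwa [ofReal_cpow_of_nonpos ha.le, ← ofReal_neg, ofReal_cpow_half (by linarith),
    show (π : ℂ) * I * (1 / 2) = π / 2 * I by ring, exp_pi_div_two_mul_I, mul_comm] at h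

theorem tendsto_cpow_half_nhdsWithin_im_neg_of_neg {a : ℝ} (ha : a < 0) :
    Tendsto (· ^ (1 / 2 : ℂ)) (𝓝[{z : ℂ | z.im < 0}] (a : ℂ)) (𝓝 (-I * √(-a))) := by
  have h := tendsto_cpow_const_nhdsWithin_im_neg_of_neg ha (1 / 2)
  rwa [← ofReal_neg, ofReal_cpow_half (by linarith),
    show -((π : ℂ) * I * (1 / 2)) = -π / 2 * I by ring, exp_neg_pi_div_two_mul_I, mul_comm] at h

theorem tendsto_cpow_half_of_pos {a : ℝ} (ha : 0 < a) :
    Tendsto (· ^ (1 / 2 : ℂ)) (𝓝 (a : ℂ)) (𝓝 (√a : ℂ)) := by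
  simpa only [ofReal_cpow_half ha.le] using
    (continuousAt_cpow_const (b := 1 / 2) (ofReal_mem_slitPlane.2 ha)).tendsto

theorem tendsto_sub_one_nhdsWithin_im (p : ℝ → Prop) (a : ℂ) :
    Tendsto (· - 1) (𝓝[{z : ℂ | p z.im}] a) (𝓝[{z : ℂ | p z.im}] (a - 1)) :=
  (continuous_sub_right 1).continuousWithinAt.tendsto_nhdsWithin fun z hz => by simpa using hz

theorem tendsto_ofReal_add_mul_I_nhdsGT (x : ℝ) :
    Tendsto (fun ε : ℝ => (x : ℂ) + ε * I) (𝓝[>] 0) (𝓝[{z : ℂ | 0 < z.im}] (x : ℂ)) := by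
  refine tendsto_nhdsWithin_of_tendsto_nhds_of_eventually_within _ ?_ ?_
  · exact ((by fun_prop : Continuous fun ε : ℝ => (x : ℂ) + ε * I).tendsto' 0 _
      (by simp)).mono_left nhdsWithin_le_nhds
  · filter_upwards [self_mem_nhdsWithin] with ε hε using by simpa using hε

theorem tendsto_ofReal_sub_mul_I_nhdsGT (x : ℝ) :
    Tendsto (fun ε : ℝ => (x : ℂ) - ε * I) (𝓝[>] 0) (𝓝[{z : ℂ | z.im < 0}] (x : ℂ)) := by
  refine tendsto_nhdsWithin_of_tendsto_nhds_of_eventually_within _ ?_ ?_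
  · exact ((by fun_prop : Continuous fun ε : ℝ => (x : ℂ) - ε * I).tendsto' 0 _
      (by simp)).mono_left nhdsWithin_le_nhds
  · filter_upwards [self_mem_nhdsWithin] with ε hε using by simpa using hε

theorem tendsto_joukowskiInv_of_tendsto_cpow_half_sub_one {x : ℝ} (hx : -1 < x) {l : Filter ℂ}
    (hl : l ≤ 𝓝 (x : ℂ)) {c : ℂ} (h : Tendsto (fun z : ℂ => (z - 1) ^ (1 / 2 : ℂ)) l (𝓝 c)) :
    Tendsto JoukowskiInv l (𝓝 ((x : ℂ) - c * √(1 + x))) := by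
  have hplus : Tendsto (fun z : ℂ => (z + 1) ^ (1 / 2 : ℂ)) l (𝓝 (√(1 + x) : ℂ)) := by
    have hsqrt := tendsto_cpow_half_of_pos (a := 1 + x) (by linarith)
    rw [ofReal_add, ofReal_one, add_comm] at hsqrt
    exact (hsqrt.comp ((continuous_add_const 1).tendsto _)).mono_left hl
  exact (tendsto_id.mono_left hl).sub (h.mul hplus)

theorem tendsto_joukowskiInv_nhdsWithin_im_nonneg {x : ℝ} (hx : x ∈ Set.Ioo (-1 : ℝ) 1) :
    Tendsto JoukowskiInv (𝓝[{z : ℂ | 0 ≤ z.im}] (x : ℂ))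
      (𝓝 ((x : ℂ) - I * √(1 - x) * √(1 + x))) := by
  refine tendsto_joukowskiInv_of_tendsto_cpow_half_sub_one hx.1 nhdsWithin_le_nhds ?_
  have hsqrt := tendsto_cpow_half_nhdsWithin_im_nonneg_of_neg (a := x - 1) (by linarith [hx.2])
  rw [neg_sub, ofReal_sub, ofReal_one] at hsqrt
  exact hsqrt.comp (tendsto_sub_one_nhdsWithin_im (0 ≤ ·) x)

theorem tendsto_joukowskiInv_nhdsWithin_im_neg {x : ℝ} (hx : x ∈ Set.Ioo (-1 : ℝ) 1) :
    Tendsto JoukowskiInv (𝓝[{z : ℂ | z.im < 0}] (x : ℂ))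
      (𝓝 ((x : ℂ) + I * √(1 - x) * √(1 + x))) := by
  have hsqrt := tendsto_cpow_half_nhdsWithin_im_neg_of_neg (a := x - 1) (by linarith [hx.2])
  rw [neg_sub, ofReal_sub, ofReal_one] at hsqrt
  convert tendsto_joukowskiInv_of_tendsto_cpow_half_sub_one hx.1 nhdsWithin_le_nhds
    (hsqrt.comp (tendsto_sub_one_nhdsWithin_im (· < 0) x)) using 2
  ring

/-- **Boundary values of the inverse Joukowski transform and the Chebyshev identity.**
For `x ∈ (−1,1)`: `lim_{ε→0⁺} J₊⁻¹(x+iε) = x − i√(1−x)√(1+x)` and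
`lim_{ε→0⁺} J₊⁻¹(x−iε) = x + i√(1−x)√(1+x)`; moreover, for every `k ≥ 0`,
`(x − i√(1−x²))^k + (x + i√(1−x²))^k = 2·T_k(x)`.  Consequently the sum of the two
one-sided boundary values of `J₊⁻¹(·)^k` at `x` equals `2·T_k(x)`. -/
theorem joukowskiInv_boundary_values (x : ℝ) (hx : x ∈ Set.Ioo (-1 : ℝ) 1) :
    Tendsto (fun ε : ℝ => JoukowskiInv ((x : ℂ) + ε * Complex.I))
      (nhdsWithin 0 (Set.Ioi 0))
      (nhds ((x : ℂ) - Complex.I * (Real.sqrt (1 - x) : ℂ) * (Real.sqrt (1 + x) : ℂ))) ∧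
    Tendsto (fun ε : ℝ => JoukowskiInv ((x : ℂ) - ε * Complex.I))
      (nhdsWithin 0 (Set.Ioi 0))
      (nhds ((x : ℂ) + Complex.I * (Real.sqrt (1 - x) : ℂ) * (Real.sqrt (1 + x) : ℂ))) ∧
    (∀ k : ℕ,
      ((x : ℂ) - Complex.I * (Real.sqrt (1 - x ^ 2) : ℂ)) ^ k +
          ((x : ℂ) + Complex.I * (Real.sqrt (1 - x ^ 2) : ℂ)) ^ k =
        2 * (Polynomial.Chebyshev.T ℂ (k : ℤ)).eval (x : ℂ)) ∧
    (∀ k : ℕ,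
      ((x : ℂ) - Complex.I * (Real.sqrt (1 - x) : ℂ) * (Real.sqrt (1 + x) : ℂ)) ^ k +
          ((x : ℂ) + Complex.I * (Real.sqrt (1 - x) : ℂ) * (Real.sqrt (1 + x) : ℂ)) ^ k =
        2 * (Polynomial.Chebyshev.T ℂ (k : ℤ)).eval (x : ℂ)) := by
  have hsq : (x : ℂ) ^ 2 + (√(1 - x ^ 2) : ℂ) ^ 2 = 1 := by
    norm_cast
    rw [Real.sq_sqrt (by nlinarith [hx.1, hx.2])]
    ring
  have hsq' : (x : ℂ) ^ 2 + (√(1 - x) * √(1 + x) : ℂ) ^ 2 = 1 := by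
    norm_cast
    rw [mul_pow, Real.sq_sqrt (by linarith [hx.2]), Real.sq_sqrt (by linarith [hx.1])]
    ring
  refine ⟨?_, ?_, sub_I_mul_pow_add_add_I_mul_pow hsq, ?_⟩
  · exact (tendsto_joukowskiInv_nhdsWithin_im_nonneg hx).comp
      ((tendsto_ofReal_add_mul_I_nhdsGT x).mono_right
        (nhdsWithin_mono _ fun z (hz : 0 < z.im) => hz.le))
  · exact (tendsto_joukowskiInv_nhdsWithin_im_neg hx).comp (tendsto_ofReal_sub_mul_I_nhdsGT x)
  · simpa only [mul_assoc] using sub_I_mul_pow_add_add_I_mul_pow hsq'
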